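/- arXiv:2510.10277 — 3 statements merged into one kernel-verified Lean document; each statement's English description precedes it below -/
import Mathlib

section
/- Let K = ℚ(√d) be a real quadratic field (d > 1 squarefree), 𝔞 a nonzero ideal of O_K with absolute norm N𝔞, and q_A the quadratic form on V_A = ℚ × ℚ × K given by q_A(x, y, λ) = N(λ)/N𝔞 − x·y. Then for every ℚ-basis (e₁, e₂, e₃, e₄) of V_A, the determinant of the Gram matrix ((eᵢ, eⱼ))ᵢⱼ of q_A equals d·r² for some nonzero rational number r; that is, the discriminant d(V_A) of (V_A, q_A) equals d in ℚ×/(ℚ×)². -/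
/-!
In the basis `(1,0,0), (0,1,0), (0,0,1), (0,0,√d)` of `ℚ × ℚ × K` the Gram matrix of `q_A` is
block diagonal: a hyperbolic plane `!![0, -1; -1, 0]` coming from `-x·y`, and `(1/N𝔞)` times the
Gram matrix `!![2, 0; 0, -2d]` of the norm form `N(a + b√d) = a² - d b²`. Its determinant is
therefore `4d / N𝔞²`, and a change of basis multiplies the Gram determinant by the square of the
(nonzero) determinant of the transition matrix.
-/

open Module QuadraticMap
open LinearMap.BilinForm (toMatrix toMatrix_apply)

namespace LinearMap.BilinForm

variable {R M ι κ : Type*} [CommRing R] [AddCommGroup M] [Module R M]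
  [Fintype ι] [DecidableEq ι] [Fintype κ] [DecidableEq κ]

theorem toMatrix_reindex (B : LinearMap.BilinForm R M) (b : Basis ι R M) (σ : ι ≃ κ) :
    toMatrix (b.reindex σ) B = (toMatrix b B).submatrix σ.symm σ.symm := by
  ext i j
  simp [toMatrix_apply]

theorem det_toMatrix_eq_sq_mul (B : LinearMap.BilinForm R M) (e b : Basis ι R M) :
    (toMatrix b B).det = (e.toMatrix b).det ^ 2 * (toMatrix e B).det := by
  rw [← toMatrix_mul_basis_toMatrix e b, Matrix.det_mul, Matrix.det_mul, Matrix.det_transpose]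
  ring

end LinearMap.BilinForm

theorem QuadraticMap.toMatrix_polarBilin {R M ι : Type*} [CommRing R] [AddCommGroup M]
    [Module R M] [Fintype ι] [DecidableEq ι] (Q : QuadraticMap R M R) (b : Basis ι R M) :
    toMatrix b Q.polarBilin = Matrix.of fun i j => polar Q (b i) (b j) := by
  ext i j
  rw [toMatrix_apply, polarBilin_apply_apply, Matrix.of_apply]

theorem QuadraticMap.polar_eq_of_eq_sub_mul {F V : Type*} [CommRing F] [AddCommGroup V]
    {q : F × F × V → F} {f : V → F} (hq : ∀ z : F × F × V, q z = f z.2.2 - z.1 * z.2.1)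
    (z w : F × F × V) :
    polar q z w = polar f z.2.2 w.2.2 - (z.1 * w.2.1 + w.1 * z.2.1) := by
  simp only [polar, hq, Prod.fst_add, Prod.snd_add]
  ring

section HyperbolicPlane

variable {F V ι : Type*} [CommRing F] [AddCommGroup V] [Module F V] [Fintype ι] [DecidableEq ι]

/-- The basis `(1,0,0), (0,1,0), (0,0,bV i)` of `F × F × V`. -/
noncomputable def Module.Basis.finTwoProdProd (bV : Basis ι F V) :
    Basis (Fin 2 ⊕ ι) F (F × F × V) :=
  ((Basis.finTwoProd F).prod bV).map (LinearEquiv.prodAssoc F F F V)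

theorem det_toMatrix_polarBilin_finTwoProdProd {q : QuadraticForm F (F × F × V)} {f : V → F}
    (hq : ∀ z : F × F × V, q z = f z.2.2 - z.1 * z.2.1) (bV : Basis ι F V) :
    (toMatrix bV.finTwoProdProd q.polarBilin).det =
      -(Matrix.of fun i j => polar f (bV i) (bV j)).det := by
  have hf0 : f 0 = 0 := by simpa using (hq 0).symm
  have hblocks : toMatrix bV.finTwoProdProd q.polarBilin =
      Matrix.fromBlocks !![0, -1; -1, 0] 0 0 (Matrix.of fun i j => polar f (bV i) (bV j)) := by
    ext (i | i) (j | j) <;>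
      simp only [toMatrix_apply, polarBilin_apply_apply, polar_eq_of_eq_sub_mul hq]
    · fin_cases i <;> fin_cases j <;> simp [Basis.finTwoProdProd, polar, hf0]
    all_goals simp [Basis.finTwoProdProd, polar, hf0]
  rw [hblocks, Matrix.det_fromBlocks_zero₂₁, Matrix.det_fin_two_of]
  ring

end HyperbolicPlane

theorem Int.not_isSquare_cast_of_squarefree {d : ℤ} (hsf : Squarefree d) (hd : d ≠ 1) :
    ¬IsSquare (d : ℚ) := by
  rw [Rat.isSquare_intCast_iff]
  rintro ⟨m, rfl⟩
  have hm : IsUnit m := hsf m dvd_rfl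
  rcases Int.isUnit_iff.mp hm with rfl | rfl <;> simp at hd

section SqrtBasis

variable {F K : Type*} [Field F] [Field K] [Algebra F K] {c : F} {α : K}

theorem linearIndependent_one_of_sq_eq_algebraMap (hα : α ^ 2 = algebraMap F K c)
    (hc : ¬IsSquare c) : LinearIndependent F ![1, α] := by
  rw [LinearIndependent.pair_iff]
  intro s t hst
  by_cases ht : t = 0
  · subst ht
    simpa using hst
  · refine absurd ⟨-s / t, ?_⟩ hc
    have hαs : α = algebraMap F K (-s / t) := by
      rw [Algebra.smul_def, Algebra.smul_def, mul_one] at hst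
      rw [map_div₀, map_neg, eq_div_iff ((map_ne_zero _).mpr ht)]
      linear_combination hst
    apply FaithfulSMul.algebraMap_injective F K
    rw [← hα, hαs, map_mul, _root_.sq]

variable (hα : α ^ 2 = algebraMap F K c) (hc : ¬IsSquare c) (hK : finrank F K = 2)

noncomputable def sqrtBasis : Basis (Fin 2) F K :=
  basisOfLinearIndependentOfCardEqFinrank (linearIndependent_one_of_sq_eq_algebraMap hα hc)
    (by simp [hK])

@[simp]
theorem sqrtBasis_zero : sqrtBasis hα hc hK 0 = 1 := by
  simp [sqrtBasis]

@[simp]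
theorem sqrtBasis_one : sqrtBasis hα hc hK 1 = α := by
  simp [sqrtBasis]

theorem norm_algebraMap_add_smul (hα : α ^ 2 = algebraMap F K c) (hc : ¬IsSquare c)
    (hK : finrank F K = 2) (a b : F) :
    Algebra.norm F (algebraMap F K a + b • α) = a ^ 2 - c * b ^ 2 := by
  set e := sqrtBasis hα hc hK
  set x := algebraMap F K a + b • α
  have hx0 : x * e 0 = a • e 0 + b • e 1 := by
    simp [e, x, Algebra.smul_def]
  have hx1 : x * e 1 = (c * b) • e 0 + a • e 1 := by
    simp only [e, x, sqrtBasis_zero, sqrtBasis_one, Algebra.smul_def, map_mul]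
    linear_combination algebraMap F K b * hα
  have hmul : Algebra.leftMulMatrix e x = !![a, c * b; b, a] := by
    ext i j
    rw [Algebra.leftMulMatrix_eq_repr_mul]
    fin_cases j <;> dsimp only [Fin.zero_eta, Fin.mk_one]
    · rw [hx0]; fin_cases i <;> simp
    · rw [hx1]; fin_cases i <;> simp
  rw [Algebra.norm_eq_matrix_det e, hmul, Matrix.det_fin_two_of]
  ring

theorem polar_norm_sqrtBasis :
    Matrix.of (fun i j => polar (Algebra.norm F) (sqrtBasis hα hc hK i) (sqrtBasis hα hc hK j)) =
      !![2, 0; 0, -2 * c] := by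
  set v : F → F → K := fun a b => algebraMap F K a + b • α
  have hpolar (a b a' b' : F) :
      polar (Algebra.norm F) (v a b) (v a' b') = 2 * (a * a' - c * b * b') := by
    have hadd : v a b + v a' b' = v (a + a') (b + b') := by
      simp only [v, map_add, add_smul]; abel
    simp only [polar, hadd, v, norm_algebraMap_add_smul hα hc hK]
    ring
  have he0 : sqrtBasis hα hc hK 0 = v 1 0 := by simp [v]
  have he1 : sqrtBasis hα hc hK 1 = v 0 1 := by simp [v]
  ext i j
  fin_cases i <;> fin_cases j <;> simp [he0, he1, hpolar]

theorem det_polar_smul_norm_sqrtBasis (t : F) :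
    (Matrix.of fun i j =>
      polar (t • ⇑(Algebra.norm F)) (sqrtBasis hα hc hK i) (sqrtBasis hα hc hK j)).det =
      -4 * c * t ^ 2 := by
  have hgram : (Matrix.of fun i j =>
      polar (t • ⇑(Algebra.norm F)) (sqrtBasis hα hc hK i) (sqrtBasis hα hc hK j)) =
      t • !![2, 0; 0, -2 * c] := by
    rw [← polar_norm_sqrtBasis hα hc hK, Matrix.smul_of]
    ext i j
    exact polar_smul _ _ _ _
  rw [hgram, Matrix.det_smul, Matrix.det_fin_two_of, Fintype.card_fin]
  ring

end SqrtBasis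

/-- The discriminant of `(V_A, q_A)` with `q_A(x,y,λ) = N(λ)/N𝔞 - x·y`
equals `d` in `ℚ×/(ℚ×)²`: for every ℚ-basis of `V_A = ℚ × ℚ × K`, the determinant
of the Gram matrix of `q_A` equals `d·r²` for some nonzero rational `r`. -/
theorem statement2 (K : Type) [Field K] [NumberField K]
    (hdeg : Module.finrank ℚ K = 2)
    (d : ℤ) (hd : 1 < d) (hsf : Squarefree d)
    (α : K) (hα : α ^ 2 = (d : K))
    (𝔞 : Ideal (NumberField.RingOfIntegers K)) (h𝔞 : 𝔞 ≠ ⊥)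
    (q : QuadraticForm ℚ (ℚ × ℚ × K))
    (hq : ∀ z : ℚ × ℚ × K,
      q z = Algebra.norm ℚ z.2.2 / (Ideal.absNorm 𝔞 : ℚ) - z.1 * z.2.1) :
    ∀ b : Module.Basis (Fin 4) ℚ (ℚ × ℚ × K),
      ∃ r : ℚ, r ≠ 0 ∧
        Matrix.det (Matrix.of fun i j : Fin 4 => QuadraticMap.polar (⇑q) (b i) (b j))
          = (d : ℚ) * r ^ 2 := by
  intro b
  have hc : ¬IsSquare (d : ℚ) := Int.not_isSquare_cast_of_squarefree hsf hd.ne'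
  have hα' : α ^ 2 = algebraMap ℚ K d := by rw [hα, map_intCast]
  set n : ℚ := (Ideal.absNorm 𝔞 : ℚ)
  have hn : n ≠ 0 := by simpa [n, Ideal.absNorm_eq_zero_iff] using h𝔞
  have hq' : ∀ z : ℚ × ℚ × K, q z = (n⁻¹ • ⇑(Algebra.norm ℚ)) z.2.2 - z.1 * z.2.1 := by
    intro z
    rw [hq, Pi.smul_apply, smul_eq_mul, inv_mul_eq_div]
  let e : Basis (Fin 4) ℚ (ℚ × ℚ × K) :=
    (sqrtBasis hα' hc hdeg).finTwoProdProd.reindex finSumFinEquiv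
  have hgram_e : (toMatrix e q.polarBilin).det = 4 * d / n ^ 2 := by
    rw [LinearMap.BilinForm.toMatrix_reindex, Matrix.det_submatrix_equiv_self,
      det_toMatrix_polarBilin_finTwoProdProd hq', det_polar_smul_norm_sqrtBasis]
    field_simp
  have hdet_ne : (e.toMatrix b).det ≠ 0 := (e.isUnit_det b).ne_zero
  refine ⟨2 * (e.toMatrix b).det / n, by positivity, ?_⟩
  rw [← toMatrix_polarBilin, LinearMap.BilinForm.det_toMatrix_eq_sq_mul _ e b, hgram_e]
  field_simp
  ring
end

section
/- Let K be a real quadratic field with field norm N = N_{K/ℚ}, let c be a positive rational number, and let Q be the quadratic form Q(z) = N(z)/c on K viewed as a 2-dimensional ℚ-vector space. For a ℚ-linear automorphism g : K → K the following are equivalent: (i) Q(g(z)) = Q(z) for all z ∈ K and det(g) = 1; (ii) there exists x ∈ K with N(x) = 1 such that g(z) = x·z for all z ∈ K. Moreover, the element x in (ii) is unique. Consequently the special orthogonal group SO(K, Q) is isomorphic to the norm-one group K¹ = { x ∈ K× : N(x) = 1 }. -/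
/-!
In the basis `1, α` of `K` (with `α² = δ`) the norm is `N(a + bα) = a² - δb²`. If `g` preserves
`N` and has determinant `1`, put `x = g 1`; then `N x = 1`, and `h = x⁻¹ · g` still preserves `N`,
has determinant `N(x⁻¹) det g = 1`, and fixes `1`. Writing `h α = s + tα`, the matrix of `h` is
triangular, so `t = det h = 1`, and then `N(s + α) = N α` reads `s² - δ = -δ`, so `s = 0`.
Hence `h = id`, i.e. `g` is multiplication by `x`.
-/

open Module

namespace QuadraticExtension

variable {F K : Type*} [Field F] [Field K] [Algebra F K] {α : K}

theorem linearIndependent_one_of_notMem_range (hα : α ∉ Set.range (algebraMap F K)) :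
    LinearIndependent F ![1, α] := by
  rw [LinearIndependent.pair_iff' one_ne_zero]
  intro a ha
  exact hα ⟨a, by rw [Algebra.algebraMap_eq_smul_one, ha]⟩

noncomputable def basisOneAnd (hK : finrank F K = 2) (hα : α ∉ Set.range (algebraMap F K)) :
    Basis (Fin 2) F K :=
  basisOfLinearIndependentOfCardEqFinrank (linearIndependent_one_of_notMem_range hα)
    (by simp [hK])

@[simp] theorem basisOneAnd_apply_zero
    (hK : finrank F K = 2) (hα : α ∉ Set.range (algebraMap F K)) :
    basisOneAnd hK hα 0 = 1 := by
  simp [basisOneAnd]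

@[simp] theorem basisOneAnd_apply_one
    (hK : finrank F K = 2) (hα : α ∉ Set.range (algebraMap F K)) :
    basisOneAnd hK hα 1 = α := by
  simp [basisOneAnd]

@[simp] theorem basisOneAnd_repr_one
    (hK : finrank F K = 2) (hα : α ∉ Set.range (algebraMap F K)) :
    (basisOneAnd hK hα).repr 1 = Finsupp.single 0 1 := by
  simpa using (basisOneAnd hK hα).repr_self 0

@[simp] theorem basisOneAnd_repr_self
    (hK : finrank F K = 2) (hα : α ∉ Set.range (algebraMap F K)) :
    (basisOneAnd hK hα).repr α = Finsupp.single 1 1 := by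
  simpa using (basisOneAnd hK hα).repr_self 1

theorem exists_eq_smul_one_add_smul (hK : finrank F K = 2)
    (hα : α ∉ Set.range (algebraMap F K)) (z : K) : ∃ a b : F, z = a • 1 + b • α := by
  refine ⟨(basisOneAnd hK hα).repr z 0, (basisOneAnd hK hα).repr z 1, ?_⟩
  have h := (basisOneAnd hK hα).sum_repr z
  rw [Fin.sum_univ_two, basisOneAnd_apply_zero, basisOneAnd_apply_one] at h
  exact h.symm

theorem norm_smul_one_add_smul (hK : finrank F K = 2) (hα : α ∉ Set.range (algebraMap F K))
    {δ : F} (hαδ : α ^ 2 = algebraMap F K δ) (a b : F) :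
    Algebra.norm F (a • 1 + b • α) = a ^ 2 - δ * b ^ 2 := by
  have hmul : (a • 1 + b • α) * α = (b * δ) • 1 + a • α := by
    rw [add_mul, smul_mul_assoc, smul_mul_assoc, one_mul, ← sq, hαδ, mul_smul,
      Algebra.algebraMap_eq_smul_one]
    abel
  rw [Algebra.norm_eq_matrix_det (basisOneAnd hK hα), Matrix.det_fin_two]
  simp [Algebra.leftMulMatrix_eq_repr_mul, hmul]
  ring

theorem norm_eq_neg_of_sq_eq (hK : finrank F K = 2) (hα : α ∉ Set.range (algebraMap F K))
    {δ : F} (hαδ : α ^ 2 = algebraMap F K δ) : Algebra.norm F α = -δ := by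
  simpa using norm_smul_one_add_smul hK hα hαδ 0 1

theorem eq_id_of_map_one_of_norm_map_of_det_eq_one (hK : finrank F K = 2)
    (hα : α ∉ Set.range (algebraMap F K)) {δ : F} (hαδ : α ^ 2 = algebraMap F K δ)
    {h : K →ₗ[F] K} (h1 : h 1 = 1)
    (hN : Algebra.norm F (h α) = Algebra.norm F α) (hdet : LinearMap.det h = 1) :
    h = LinearMap.id := by
  obtain ⟨s, t, hs⟩ := exists_eq_smul_one_add_smul hK hα (h α)
  have ht : t = 1 := by
    rw [← hdet, ← LinearMap.det_toMatrix (basisOneAnd hK hα), Matrix.det_fin_two]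
    simp [LinearMap.toMatrix_apply, h1, hs]
  subst ht
  have hs0 : s = 0 := by
    have := norm_smul_one_add_smul hK hα hαδ s 1
    rw [← hs, hN, norm_eq_neg_of_sq_eq hK hα hαδ] at this
    exact pow_eq_zero_iff two_ne_zero |>.mp (by linear_combination -this)
  refine (basisOneAnd hK hα).ext fun i => ?_
  fin_cases i
  · simpa using h1
  · simp [hs, hs0]

theorem map_eq_map_one_mul_of_norm_map_of_det_eq_one (hK : finrank F K = 2)
    (hα : α ∉ Set.range (algebraMap F K)) {δ : F} (hαδ : α ^ 2 = algebraMap F K δ)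
    {g : K →ₗ[F] K} (hN : ∀ z, Algebra.norm F (g z) = Algebra.norm F z)
    (hdet : LinearMap.det g = 1) (z : K) :
    g z = g 1 * z := by
  set x := g 1
  have hx : Algebra.norm F x = 1 := by rw [hN, map_one]
  have hx0 : x ≠ 0 := (Algebra.norm_ne_zero_iff_of_basis (basisOneAnd hK hα)).mp (by simp [hx])
  have hxinv : Algebra.norm F x⁻¹ = 1 := by
    have h := map_mul (Algebra.norm F) x⁻¹ x
    rwa [inv_mul_cancel₀ hx0, map_one, hx, mul_one, eq_comm] at h
  have hid : Algebra.lmul F K x⁻¹ ∘ₗ g = LinearMap.id := by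
    refine eq_id_of_map_one_of_norm_map_of_det_eq_one hK hα hαδ ?_ ?_ ?_
    · simp [x, hx0]
    · simp [hN, hxinv]
    · rw [LinearMap.det_comp, ← Algebra.norm_apply, hxinv, hdet, one_mul]
  have := congrArg (x * ·) (LinearMap.congr_fun hid z)
  simpa [← mul_assoc, hx0] using this

end QuadraticExtension

theorem sqrt_notMem_range_algebraMap_rat {K : Type*} [Field K] [CharZero K] {d : ℤ}
    (hd : 1 < d) (hsf : Squarefree d) {α : K} (hα : α ^ 2 = (d : K)) :
    α ∉ Set.range (algebraMap ℚ K) := by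
  rintro ⟨q, rfl⟩
  have hq : IsSquare (d : ℚ) := ⟨q, by
    apply (algebraMap ℚ K).injective
    rw [map_mul, ← sq, hα, map_intCast]⟩
  obtain ⟨r, rfl⟩ := Rat.isSquare_intCast_iff.mp hq
  have := Int.isUnit_iff.mp (hsf r ⟨1, by ring⟩)
  rcases this with rfl | rfl <;> simp at hd

/-- For `K` a real quadratic field with norm `N` and `Q(z) = N(z)/c`
(`c > 0` rational), a ℚ-linear automorphism `g` of `K` preserves `Q` and has
determinant `1` if and only if it is multiplication by a (unique) norm-one
element `x ∈ K`; consequently `SO(K, Q) ≅ K¹`. -/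
theorem statement13 (K : Type) [Field K] [NumberField K]
    (hdeg : Module.finrank ℚ K = 2)
    (d : ℤ) (hd : 1 < d) (hsf : Squarefree d)
    (α : K) (hα : α ^ 2 = (d : K))
    (c : ℚ) (hc : 0 < c) :
    ∀ g : K ≃ₗ[ℚ] K,
      (((∀ z : K, Algebra.norm ℚ (g z) / c = Algebra.norm ℚ z / c) ∧
          LinearMap.det (g : K →ₗ[ℚ] K) = 1) ↔
        ∃ x : K, Algebra.norm ℚ x = 1 ∧ ∀ z : K, g z = x * z) ∧
      (∀ x y : K,
        (Algebra.norm ℚ x = 1 ∧ ∀ z : K, g z = x * z) →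
        (Algebra.norm ℚ y = 1 ∧ ∀ z : K, g z = y * z) → x = y) := by
  intro g
  have hαℚ := sqrt_notMem_range_algebraMap_rat hd hsf hα
  have hαd : α ^ 2 = algebraMap ℚ K d := by rw [hα, map_intCast]
  refine ⟨⟨fun ⟨hQ, hdet⟩ => ?_, fun ⟨x, hx, hgx⟩ => ⟨?_, ?_⟩⟩, ?_⟩
  · have hN (z : K) : Algebra.norm ℚ (g z) = Algebra.norm ℚ z :=
      (div_left_inj' hc.ne').mp (hQ z)
    exact ⟨g 1, by rw [hN, map_one],
      QuadraticExtension.map_eq_map_one_mul_of_norm_map_of_det_eq_one hdeg hαℚ hαd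
        (g := g.toLinearMap) hN hdet⟩
  · intro z
    rw [hgx, map_mul, hx, one_mul]
  · have hg : (g : K →ₗ[ℚ] K) = Algebra.lmul ℚ K x := LinearMap.ext hgx
    rw [hg, ← Algebra.norm_apply, hx]
  · rintro x y ⟨-, hx⟩ ⟨-, hy⟩
    simpa using (hx 1).symm.trans (hy 1)
end

section
/- Let K be a real quadratic field with discriminant d_K and nontrivial automorphism σ, let 𝔞 be a nonzero ideal of the ring of integers O_K with absolute norm N𝔞, and let (e₁, e₂) be a ℤ-basis of 𝔞. Then the determinant of the 2×2 matrix with (i,j) entry Tr_{K/ℚ}(eᵢ·σ(eⱼ)) equals −(N𝔞)²·d_K. Equivalently, the Gram matrix of the twisted trace form (x, y) ↦ Tr_{K/ℚ}(x·σ(y))/N𝔞 with respect to (e₁, e₂) has determinant −d_K. -/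
/-!
Since `σ` is the only nontrivial automorphism, `Tr(x σ y) = x σ y + σ x y`, and a 2×2 computation
turns the twisted Gram determinant of `(e₁, e₂)` into `-disc(e₁, e₂)`. The discriminant of a
`ℤ`-basis of `𝔞` is `d_K` times the squared determinant of the change of basis from a `ℤ`-basis
of `O_K`, and that determinant is `± N𝔞`.
-/

open NumberField Module

section QuadraticExtension

variable {F K : Type*} [Field F] [Field K] [Algebra F K] [FiniteDimensional F K]
  {σ : K ≃ₐ[F] K}

theorem AlgEquiv.card_eq_two_of_finrank_eq_two (hdeg : finrank F K = 2) (hσ : σ ≠ 1) :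
    Fintype.card (K ≃ₐ[F] K) = 2 := by
  refine le_antisymm ?_ (Fintype.one_lt_card_iff.mpr ⟨σ, 1, hσ⟩)
  calc Fintype.card (K ≃ₐ[F] K) = Fintype.card (K →ₐ[F] K) :=
        Fintype.card_congr (algEquivEquivAlgHom F K)
    _ ≤ finrank K (K →ₗ[F] K) := finrank_algHom F K
    _ = 2 := by rw [Module.finrank_linearMap_self, hdeg]

theorem IsGalois.of_finrank_eq_two (hdeg : finrank F K = 2) (hσ : σ ≠ 1) : IsGalois F K :=
  IsGalois.of_card_aut_eq_finrank F K <| by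
    rw [Nat.card_eq_fintype_card, AlgEquiv.card_eq_two_of_finrank_eq_two hdeg hσ, hdeg]

theorem AlgEquiv.eq_one_or_eq_of_finrank_eq_two (hdeg : finrank F K = 2) (hσ : σ ≠ 1)
    (τ : K ≃ₐ[F] K) : τ = 1 ∨ τ = σ := by
  classical
  have huniv : ({1, σ} : Finset (K ≃ₐ[F] K)) = Finset.univ := Finset.eq_univ_of_card _ <| by
    rw [Finset.card_pair (Ne.symm hσ), AlgEquiv.card_eq_two_of_finrank_eq_two hdeg hσ]
  simpa [← huniv] using Finset.mem_univ τ

theorem AlgEquiv.apply_apply_eq_self_of_finrank_eq_two (hdeg : finrank F K = 2) (hσ : σ ≠ 1)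
    (z : K) : σ (σ z) = z := by
  rcases AlgEquiv.eq_one_or_eq_of_finrank_eq_two hdeg hσ (σ * σ) with h | h
  · exact congrArg (fun τ : K ≃ₐ[F] K => τ z) h
  · exact absurd (mul_eq_left.mp h) hσ

theorem algebraMap_trace_eq_add_of_finrank_eq_two (hdeg : finrank F K = 2) (hσ : σ ≠ 1)
    (z : K) : algebraMap F K (Algebra.trace F K z) = z + σ z := by
  have := IsGalois.of_finrank_eq_two hdeg hσ
  rw [trace_eq_sum_automorphisms, Fintype.sum_eq_add 1 σ (Ne.symm hσ) fun τ hτ =>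
    absurd (AlgEquiv.eq_one_or_eq_of_finrank_eq_two hdeg hσ τ) (by tauto)]
  rfl

/-- If `E` is the matrix with rows `(e i, σ (e i))`, the Gram matrices of `Tr(x y)` and
`Tr(x σ y)` are `E Eᵀ` and `E J Eᵀ`, where `J` is the swap matrix of determinant `-1`. -/
theorem det_trace_mul_apply_eq_neg_discr (hdeg : finrank F K = 2) (hσ : σ ≠ 1) (e : Fin 2 → K) :
    (Matrix.of fun i j => Algebra.trace F K (e i * σ (e j))).det = -Algebra.discr F e := by
  have htr := algebraMap_trace_eq_add_of_finrank_eq_two hdeg hσ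
  have hinv := AlgEquiv.apply_apply_eq_self_of_finrank_eq_two hdeg hσ
  apply (algebraMap F K).injective
  simp only [Algebra.discr_def, Matrix.det_fin_two, Matrix.of_apply, Algebra.traceMatrix_apply,
    Algebra.traceForm_apply, map_neg, map_sub, map_mul, htr, hinv]
  ring

end QuadraticExtension

section IdealBasis

variable {K : Type*} [Field K] [NumberField K] {ι : Type*} [Fintype ι] [DecidableEq ι]

theorem Algebra.discr_coe_ringOfIntegers (v : ι → 𝓞 K) :
    Algebra.discr ℚ (fun i => (v i : K)) = Algebra.discr ℤ v := by
  rw [Algebra.discr_def, Algebra.discr_def]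
  change _ = Int.castRingHom ℚ _
  rw [RingHom.map_det]
  congr 1
  ext i j
  simp only [RingHom.mapMatrix_apply, Matrix.map_apply, Algebra.traceMatrix_apply,
    Algebra.traceForm_apply, ← map_mul]
  exact Algebra.trace_localization ℤ (nonZeroDivisors ℤ) (v i * v j)

theorem Ideal.discr_basis_eq_absNorm_sq_mul_discr (b₀ : Basis ι ℤ (𝓞 K)) {𝔞 : Ideal (𝓞 K)}
    (b : Basis ι ℤ 𝔞) :
    Algebra.discr ℤ (fun i => (b i : 𝓞 K)) = (Ideal.absNorm 𝔞 : ℤ) ^ 2 * discr K := by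
  rw [← Ideal.natAbs_det_basis_change b₀ 𝔞 b, Int.natCast_natAbs, sq_abs,
    ← discr_eq_discr K b₀, Basis.det_apply, ← Algebra.discr_of_matrix_vecMul,
    b₀.toMatrix_map_vecMul]
  rfl

end IdealBasis

theorem statement14_general (K : Type) [Field K] [NumberField K]
    (hdeg : Module.finrank ℚ K = 2)
    (σ : K ≃ₐ[ℚ] K) (hσ : σ ≠ (AlgEquiv.refl : K ≃ₐ[ℚ] K))
    (𝔞 : Ideal (NumberField.RingOfIntegers K)) (h𝔞 : 𝔞 ≠ ⊥)
    (b : Module.Basis (Fin 2) ℤ 𝔞) :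
    Matrix.det (Matrix.of fun i j : Fin 2 =>
        Algebra.trace ℚ K
          (algebraMap (NumberField.RingOfIntegers K) K (b i) *
            σ (algebraMap (NumberField.RingOfIntegers K) K (b j))))
      = -((Ideal.absNorm 𝔞 : ℚ)) ^ 2 * (NumberField.discr K : ℚ) ∧
    Matrix.det (Matrix.of fun i j : Fin 2 =>
        Algebra.trace ℚ K
          (algebraMap (NumberField.RingOfIntegers K) K (b i) *
            σ (algebraMap (NumberField.RingOfIntegers K) K (b j)))
          / (Ideal.absNorm 𝔞 : ℚ))
      = -(NumberField.discr K : ℚ) := by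
  let b₀ : Basis (Fin 2) ℤ (𝓞 K) :=
    finBasisOfFinrankEq ℤ (𝓞 K) (by rw [RingOfIntegers.rank, hdeg])
  have hdet := det_trace_mul_apply_eq_neg_discr hdeg hσ (fun i => algebraMap (𝓞 K) K (b i))
  rw [Algebra.discr_coe_ringOfIntegers, Ideal.discr_basis_eq_absNorm_sq_mul_discr b₀ b] at hdet
  push_cast at hdet
  have hN : (Ideal.absNorm 𝔞 : ℚ) ≠ 0 := Nat.cast_ne_zero.mpr (mt Ideal.absNorm_eq_zero_iff.mp h𝔞)
  refine ⟨by rw [hdet]; ring, ?_⟩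
  simp only [Matrix.det_fin_two, Matrix.of_apply, div_mul_div_comm, ← sub_div] at hdet ⊢
  rw [hdet]
  field_simp

/-- For `K` a real quadratic field with discriminant `d_K` and
nontrivial automorphism `σ`, and `(e₁, e₂)` a ℤ-basis of a nonzero ideal `𝔞`
of `O_K`, the determinant of the matrix `(Tr_{K/ℚ}(eᵢ·σ(eⱼ)))ᵢⱼ` equals
`-(N𝔞)²·d_K`; equivalently, the Gram matrix of the twisted trace form
`(x,y) ↦ Tr(x·σ(y))/N𝔞` with respect to `(e₁, e₂)` has determinant `-d_K`. -/
theorem statement14 (K : Type) [Field K] [NumberField K]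
    (hdeg : Module.finrank ℚ K = 2)
    (d : ℤ) (hd : 1 < d) (hsf : Squarefree d)
    (α : K) (hα : α ^ 2 = (d : K))
    (σ : K ≃ₐ[ℚ] K) (hσ : σ ≠ (AlgEquiv.refl : K ≃ₐ[ℚ] K))
    (𝔞 : Ideal (NumberField.RingOfIntegers K)) (h𝔞 : 𝔞 ≠ ⊥)
    (b : Module.Basis (Fin 2) ℤ 𝔞) :
    Matrix.det (Matrix.of fun i j : Fin 2 =>
        Algebra.trace ℚ K
          (algebraMap (NumberField.RingOfIntegers K) K (b i) *
            σ (algebraMap (NumberField.RingOfIntegers K) K (b j))))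
      = -((Ideal.absNorm 𝔞 : ℚ)) ^ 2 * (NumberField.discr K : ℚ) ∧
    Matrix.det (Matrix.of fun i j : Fin 2 =>
        Algebra.trace ℚ K
          (algebraMap (NumberField.RingOfIntegers K) K (b i) *
            σ (algebraMap (NumberField.RingOfIntegers K) K (b j)))
          / (Ideal.absNorm 𝔞 : ℚ))
      = -(NumberField.discr K : ℚ) :=
  statement14_general K hdeg σ hσ 𝔞 h𝔞 b
end
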